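/- arXiv:1111.2843 — 8 statements merged into one kernel-verified Lean document; each statement's English description precedes it below -/
import Mathlib

section
/- Let 𝓑 be a directed family on U with U ∈ 𝓑. Every constructible set X ⊆ U (finite boolean combination of balls) can be written as a finite union of swiss cheeses. -/
variable {U : Type*}

/-- A directed family: nonempty sets, any two nested or disjoint. -/
def DirFam (𝓑 : Set (Set U)) : Prop :=
  (∀ B ∈ 𝓑, B.Nonempty) ∧
    ∀ B₀ ∈ 𝓑, ∀ B₁ ∈ 𝓑, B₀ ⊆ B₁ ∨ B₁ ⊆ B₀ ∨ B₀ ∩ B₁ = ∅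

/-- Constructible sets: finite boolean combinations of balls. -/
inductive Constr (𝓑 : Set (Set U)) : Set U → Prop
  | ball {B : Set U} : B ∈ 𝓑 → Constr 𝓑 B
  | compl {X : Set U} : Constr 𝓑 X → Constr 𝓑 Xᶜ
  | union {X Y : Set U} : Constr 𝓑 X → Constr 𝓑 Y → Constr 𝓑 (X ∪ Y)

/-- A swiss cheese: a ball minus finitely many proper sub-balls. -/
def IsCheese (𝓑 : Set (Set U)) (S : Set U) : Prop :=
  ∃ A ∈ 𝓑, ∃ H : Set (Set U), H.Finite ∧ H ⊆ 𝓑 ∧ (∀ B ∈ H, B ⊂ A) ∧ S = A \ ⋃₀ H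

/-!
Finite unions of swiss cheeses contain the balls and are closed under finite unions; the work is
closure under intersection and complement. A set `A \ ⋃₀ H`, with `A` a ball and `H` a finite
family of balls, is empty or a swiss cheese: each `B ∈ H` is disjoint from `A` (and can be
dropped), contains `A`, or is a proper sub-ball. Two cheeses intersect in such a set because their
outer balls are nested or disjoint, and the complement of `A \ ⋃₀ H` is `(univ \ A) ∪ ⋃₀ H`.
-/

open Set

variable {𝓑 : Set (Set U)}

def IsFinCheeseUnion (𝓑 : Set (Set U)) (Y : Set U) : Prop :=
  ∃ 𝓒 : Set (Set U), 𝓒.Finite ∧ (∀ S ∈ 𝓒, IsCheese 𝓑 S) ∧ Y = ⋃₀ 𝓒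

lemma isCheese_of_mem {B : Set U} (hB : B ∈ 𝓑) : IsCheese 𝓑 B :=
  ⟨B, hB, ∅, finite_empty, empty_subset _, by simp, by simp⟩

namespace IsFinCheeseUnion

lemma empty : IsFinCheeseUnion 𝓑 ∅ :=
  ⟨∅, finite_empty, by simp, sUnion_empty.symm⟩

lemma of_isCheese {S : Set U} (hS : IsCheese 𝓑 S) : IsFinCheeseUnion 𝓑 S :=
  ⟨{S}, finite_singleton S, by simpa, sUnion_singleton S |>.symm⟩

lemma sUnion_of_subset {H : Set (Set U)} (hH : H.Finite) (hH𝓑 : H ⊆ 𝓑) :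
    IsFinCheeseUnion 𝓑 (⋃₀ H) :=
  ⟨H, hH, fun _ hB => isCheese_of_mem (hH𝓑 hB), rfl⟩

lemma union {X Y : Set U} (hX : IsFinCheeseUnion 𝓑 X) (hY : IsFinCheeseUnion 𝓑 Y) :
    IsFinCheeseUnion 𝓑 (X ∪ Y) := by
  obtain ⟨𝓒, h𝓒, h𝓒c, rfl⟩ := hX
  obtain ⟨𝓓, h𝓓, h𝓓c, rfl⟩ := hY
  exact ⟨𝓒 ∪ 𝓓, h𝓒.union h𝓓, fun S hS => hS.elim (h𝓒c S) (h𝓓c S), (sUnion_union 𝓒 𝓓).symm⟩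

lemma biUnion {ι : Type*} {s : Set ι} (hs : s.Finite) {f : ι → Set U}
    (hf : ∀ i ∈ s, IsFinCheeseUnion 𝓑 (f i)) : IsFinCheeseUnion 𝓑 (⋃ i ∈ s, f i) := by
  choose! 𝓒 h𝓒 h𝓒c h𝓒eq using hf
  refine ⟨⋃ i ∈ s, 𝓒 i, hs.biUnion h𝓒, ?_, ?_⟩
  · simp only [mem_iUnion]
    rintro S ⟨i, hi, hS⟩
    exact h𝓒c i hi S hS
  · simp only [sUnion_iUnion]
    exact iUnion₂_congr h𝓒eq

end IsFinCheeseUnion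

lemma isFinCheeseUnion_ball_sdiff_sUnion (h : DirFam 𝓑) {A : Set U} (hA : A ∈ 𝓑)
    {H : Set (Set U)} (hH : H.Finite) (hH𝓑 : H ⊆ 𝓑) : IsFinCheeseUnion 𝓑 (A \ ⋃₀ H) := by
  by_cases hcov : ∃ B ∈ H, A ⊆ B
  · obtain ⟨B, hB, hAB⟩ := hcov
    rw [sdiff_eq_empty.mpr (hAB.trans (subset_sUnion_of_mem hB))]
    exact .empty
  push Not at hcov
  refine .of_isCheese ⟨A, hA, {B ∈ H | B ⊆ A}, hH.sep _, (sep_subset _ _).trans hH𝓑,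
    fun B hB => hB.2.ssubset_of_not_subset (hcov B hB.1), ?_⟩
  refine (sdiff_subset_sdiff_right (sUnion_mono (sep_subset _ _))).antisymm ?_
  rintro x ⟨hxA, hx⟩
  refine ⟨hxA, fun ⟨B, hB, hxB⟩ => ?_⟩
  rcases h.2 B (hH𝓑 hB) A hA with hBA | hAB | hdisj
  · exact hx ⟨B, ⟨hB, hBA⟩, hxB⟩
  · exact hcov B hB hAB
  · exact hdisj.subset ⟨hxB, hxA⟩

lemma IsCheese.inter (h : DirFam 𝓑) {S T : Set U} (hS : IsCheese 𝓑 S) (hT : IsCheese 𝓑 T) :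
    IsFinCheeseUnion 𝓑 (S ∩ T) := by
  obtain ⟨A, hA, H, hH, hH𝓑, -, rfl⟩ := hS
  obtain ⟨A', hA', H', hH', hH'𝓑, -, rfl⟩ := hT
  have hinter : (A \ ⋃₀ H) ∩ (A' \ ⋃₀ H') = (A ∩ A') \ ⋃₀ (H ∪ H') := by
    ext x
    simp only [sUnion_union, mem_inter_iff, mem_sdiff, mem_union]
    tauto
  rw [hinter]
  rcases h.2 A hA A' hA' with hAA' | hA'A | hdisj
  · rw [inter_eq_left.mpr hAA']
    exact isFinCheeseUnion_ball_sdiff_sUnion h hA (hH.union hH') (union_subset hH𝓑 hH'𝓑)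
  · rw [inter_eq_right.mpr hA'A]
    exact isFinCheeseUnion_ball_sdiff_sUnion h hA' (hH.union hH') (union_subset hH𝓑 hH'𝓑)
  · rw [hdisj, empty_sdiff]
    exact .empty

lemma IsCheese.compl (h : DirFam 𝓑) (hU : univ ∈ 𝓑) {S : Set U} (hS : IsCheese 𝓑 S) :
    IsFinCheeseUnion 𝓑 Sᶜ := by
  obtain ⟨A, hA, H, hH, hH𝓑, -, rfl⟩ := hS
  rw [compl_sdiff, union_comm, compl_eq_univ_sdiff, ← sUnion_singleton A]
  exact (isFinCheeseUnion_ball_sdiff_sUnion h hU (finite_singleton A)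
    (singleton_subset_iff.mpr hA)).union (.sUnion_of_subset hH hH𝓑)

namespace IsFinCheeseUnion

lemma inter (h : DirFam 𝓑) {X Y : Set U} (hX : IsFinCheeseUnion 𝓑 X)
    (hY : IsFinCheeseUnion 𝓑 Y) : IsFinCheeseUnion 𝓑 (X ∩ Y) := by
  obtain ⟨𝓒, h𝓒, h𝓒c, rfl⟩ := hX
  obtain ⟨𝓓, h𝓓, h𝓓c, rfl⟩ := hY
  rw [sUnion_inter_sUnion]
  exact .biUnion (h𝓒.prod h𝓓) fun p hp => (h𝓒c _ hp.1).inter h (h𝓓c _ hp.2)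

lemma biInter (h : DirFam 𝓑) (hU : univ ∈ 𝓑) {ι : Type*} {s : Set ι} (hs : s.Finite)
    {f : ι → Set U} (hf : ∀ i ∈ s, IsFinCheeseUnion 𝓑 (f i)) :
    IsFinCheeseUnion 𝓑 (⋂ i ∈ s, f i) := by
  induction s, hs using Set.Finite.induction_on with
  | empty => simpa using of_isCheese (isCheese_of_mem hU)
  | @insert i s _ _ ih =>
    rw [biInter_insert]
    exact (hf i (mem_insert i s)).inter h (ih fun j hj => hf j (mem_insert_of_mem i hj))

lemma compl (h : DirFam 𝓑) (hU : univ ∈ 𝓑) {Y : Set U} (hY : IsFinCheeseUnion 𝓑 Y) :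
    IsFinCheeseUnion 𝓑 Yᶜ := by
  obtain ⟨𝓒, h𝓒, h𝓒c, rfl⟩ := hY
  rw [compl_sUnion, sInter_image]
  exact .biInter h hU h𝓒 fun S hS => (h𝓒c S hS).compl h hU

end IsFinCheeseUnion

/-- Every constructible set is a finite union of swiss cheeses. -/
theorem stmt3 (𝓑 : Set (Set U)) (h : DirFam 𝓑) (hU : (Set.univ : Set U) ∈ 𝓑)
    (X : Set U) (hX : Constr 𝓑 X) :
    ∃ 𝓒 : Set (Set U), 𝓒.Finite ∧ (∀ S ∈ 𝓒, IsCheese 𝓑 S) ∧ X = ⋃₀ 𝓒 := by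
  induction hX with
  | ball hB => exact IsFinCheeseUnion.of_isCheese (isCheese_of_mem hB)
  | compl _ ih => exact IsFinCheeseUnion.compl h hU ih
  | union _ _ ihX ihY => exact IsFinCheeseUnion.union ihX ihY
end

section
/- Let 𝓑 be a directed family with U ∈ 𝓑. Every constructible set X ⊆ U admits a swiss cheese decomposition: finitely many pairwise disjoint swiss cheeses S₁,…,S_n whose union is X, such that no wheel of one S_i equals a hole of another S_j. -/
variable {U : Type*}

/-- A swiss cheese decomposition of X: wheels A i with hole sets H i, each hole a proper
sub-ball of its wheel, holes pairwise incomparable, cheeses pairwise disjoint, no wheel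
equal to a hole of any cheese, and union X. -/
def IsSCD (𝓑 : Set (Set U)) (X : Set U) (n : ℕ) (A : Fin n → Set U)
    (H : Fin n → Set (Set U)) : Prop :=
  (∀ i, A i ∈ 𝓑) ∧ (∀ i, (H i).Finite) ∧ (∀ i, H i ⊆ 𝓑) ∧
  (∀ i, ∀ B ∈ H i, B ⊂ A i) ∧
  (∀ i, ∀ B ∈ H i, ∀ C ∈ H i, B ≠ C → ¬B ⊆ C) ∧
  (∀ i j, i ≠ j → (A i \ ⋃₀ H i) ∩ (A j \ ⋃₀ H j) = ∅) ∧
  (∀ i j, A i ∉ H j) ∧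
  (⋃ i, A i \ ⋃₀ H i) = X

/-!
Refine the finitely many balls from which `X` is built to a finite family `F ∋ U` of balls; any
two of them are nested or disjoint, so `U` is partitioned into the atoms
`B \ (strictly smaller members of F)`, and each atom lies inside or outside `X`. Call a ball good
if its atom lies in `X`. Each maximal connected set of good balls gives one swiss cheese: its
wheel is the top ball, its holes are the maximal bad balls below the wheel. A point lies in the
cheese of a wheel exactly when all balls between the point and the wheel are good, which makes
the cheeses disjoint and their union `X`; wheels are good and holes bad, so no wheel is a hole.
-/

open Set

def Laminar (F : Set (Set U)) : Prop :=
  ∀ B₁ ∈ F, ∀ B₂ ∈ F, ∀ x ∈ B₁, x ∈ B₂ → B₁ ⊆ B₂ ∨ B₂ ⊆ B₁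

def Saturated (F : Set (Set U)) (X : Set U) : Prop :=
  ∀ x y, (∀ B ∈ F, x ∈ B ↔ y ∈ B) → (x ∈ X ↔ y ∈ X)

lemma DirFam.laminar_of_subset {𝓑 F : Set (Set U)} (h : DirFam 𝓑) (hF : F ⊆ 𝓑) :
    Laminar F := by
  intro B₁ hB₁ B₂ hB₂ x hx hx₂
  rcases h.2 B₁ (hF hB₁) B₂ (hF hB₂) with h₁₂ | h₂₁ | hdisj
  · exact Or.inl h₁₂
  · exact Or.inr h₂₁
  · exact absurd (hdisj ▸ ⟨hx, hx₂⟩ : x ∈ (∅ : Set U)) (notMem_empty x)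

lemma Constr.exists_finite_saturated {𝓑 : Set (Set U)} (hU : (univ : Set U) ∈ 𝓑) {X : Set U}
    (hX : Constr 𝓑 X) : ∃ F ⊆ 𝓑, F.Finite ∧ univ ∈ F ∧ Saturated F X := by
  induction hX with
  | @ball B hB =>
    exact ⟨{B, univ}, by simp [insert_subset_iff, hB, hU], toFinite _, by simp,
      fun x y h => h B (by simp)⟩
  | compl _ ih =>
    obtain ⟨F, hF𝓑, hF, hUF, hsat⟩ := ih
    exact ⟨F, hF𝓑, hF, hUF, fun x y h => not_congr (hsat x y h)⟩
  | union _ _ ihY ihZ =>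
    obtain ⟨F₁, hF₁𝓑, hF₁, hUF₁, hsat₁⟩ := ihY
    obtain ⟨F₂, hF₂𝓑, hF₂, -, hsat₂⟩ := ihZ
    exact ⟨F₁ ∪ F₂, union_subset hF₁𝓑 hF₂𝓑, hF₁.union hF₂, Or.inl hUF₁, fun x y h =>
      or_congr (hsat₁ x y fun B hB => h B (Or.inl hB)) (hsat₂ x y fun B hB => h B (Or.inr hB))⟩

namespace SwissCheese

variable {F : Set (Set U)} {X B : Set U} {x : U}

def atom (F : Set (Set U)) (B : Set U) : Set U := {x ∈ B | ∀ D ∈ F, x ∈ D → B ⊆ D}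

def Good (F : Set (Set U)) (X B : Set U) : Prop := atom F B ⊆ X

def GoodBelow (F : Set (Set U)) (X : Set U) (x : U) (B : Set U) : Prop :=
  ∀ C ∈ F, x ∈ C → C ⊆ B → Good F X C

def IsWheel (F : Set (Set U)) (X B : Set U) : Prop :=
  B ∈ F ∧ Good F X B ∧ ∀ P ∈ F, B ⊂ P → ∃ C ∈ F, B ⊆ C ∧ C ⊆ P ∧ ¬Good F X C

def holes (F : Set (Set U)) (X B : Set U) : Set (Set U) :=
  {h ∈ F | h ⊂ B ∧ ¬Good F X h ∧ ∀ C ∈ F, h ⊂ C → C ⊆ B → Good F X C}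

lemma exists_mem_atom (hlam : Laminar F) (hF : F.Finite) (hU : univ ∈ F) (x : U) :
    ∃ m ∈ F, x ∈ atom F m := by
  obtain ⟨m, ⟨hmF, hxm⟩, hmin⟩ :=
    (hF.sep (x ∈ ·)).exists_minimal ⟨univ, hU, mem_univ x⟩
  refine ⟨m, hmF, hxm, fun D hD hxD => ?_⟩
  rcases hlam m hmF D hD x hxm hxD with hmD | hDm
  · exact hmD
  · exact hmin ⟨hD, hxD⟩ hDm

lemma mem_iff_good_of_mem_atom (hsat : Saturated F X) (hx : x ∈ atom F B) :
    x ∈ X ↔ Good F X B := by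
  refine ⟨fun hxX y hy => (hsat x y fun D hD => ?_).mp hxX, fun hgood => hgood hx⟩
  exact ⟨fun hxD => hx.2 D hD hxD hy.1, fun hyD => hy.2 D hD hyD hx.1⟩

lemma holes_subset : holes F X B ⊆ F := fun _ hh => hh.1

lemma ssubset_of_mem_holes {h : Set U} (hh : h ∈ holes F X B) : h ⊂ B := hh.2.1

lemma not_good_of_mem_holes {h : Set U} (hh : h ∈ holes F X B) : ¬Good F X h := hh.2.2.1

lemma not_subset_of_mem_holes {h₁ h₂ : Set U} (h₁mem : h₁ ∈ holes F X B)
    (h₂mem : h₂ ∈ holes F X B) (hne : h₁ ≠ h₂) : ¬h₁ ⊆ h₂ := fun hsub =>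
  not_good_of_mem_holes h₂mem <|
    h₁mem.2.2.2 h₂ h₂mem.1 (hsub.ssubset_of_ne hne) (ssubset_of_mem_holes h₂mem).le

lemma mem_sdiff_sUnion_holes_iff (hF : F.Finite) (hB : Good F X B) :
    x ∈ B \ ⋃₀ holes F X B ↔ x ∈ B ∧ GoodBelow F X x B := by
  refine ⟨fun ⟨hxB, hxholes⟩ => ⟨hxB, fun C hC hxC hCB => ?_⟩,
    fun ⟨hxB, hbelow⟩ => ⟨hxB, fun ⟨h, hh, hxh⟩ => ?_⟩⟩
  · by_contra hCbad
    -- the largest bad ball between `x` and `B` is a hole containing `x`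
    obtain ⟨h, ⟨hhF, hxh, hhB_le, hhbad⟩, hmax⟩ :=
      (hF.sep fun D => x ∈ D ∧ D ⊆ B ∧ ¬Good F X D).exists_maximal ⟨C, hC, hxC, hCB, hCbad⟩
    have hhB : h ⊂ B := hhB_le.ssubset_of_ne fun heq => hhbad (heq ▸ hB)
    refine hxholes ⟨h, ⟨hhF, hhB, hhbad, fun D hD hhD hDB => ?_⟩, hxh⟩
    by_contra hDbad
    exact hhD.not_subset (hmax ⟨hD, hhD.subset hxh, hDB, hDbad⟩ hhD.le)
  · exact not_good_of_mem_holes hh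
      (hbelow h (holes_subset hh) hxh (ssubset_of_mem_holes hh).le)

lemma mem_of_goodBelow (hsat : Saturated F X) (hlam : Laminar F) (hF : F.Finite)
    (hU : univ ∈ F) (hB : B ∈ F) (hxB : x ∈ B) (hbelow : GoodBelow F X x B) : x ∈ X := by
  obtain ⟨m, hmF, hxm⟩ := exists_mem_atom hlam hF hU x
  exact (mem_iff_good_of_mem_atom hsat hxm).mpr
    (hbelow m hmF hxm.1 (hxm.2 B hB hxB))

lemma exists_isWheel_of_mem (hsat : Saturated F X) (hlam : Laminar F) (hF : F.Finite)
    (hU : univ ∈ F) (hxX : x ∈ X) : ∃ B, IsWheel F X B ∧ x ∈ B ∧ GoodBelow F X x B := by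
  obtain ⟨m, hmF, hxm⟩ := exists_mem_atom hlam hF hU x
  have hm : GoodBelow F X x m := fun C hC hxC hCm =>
    subset_antisymm hCm (hxm.2 C hC hxC) ▸ (mem_iff_good_of_mem_atom hsat hxm).mp hxX
  obtain ⟨B, ⟨hBF, hxB, hB⟩, hmax⟩ :=
    (hF.sep fun D => x ∈ D ∧ GoodBelow F X x D).exists_maximal ⟨m, hmF, hxm.1, hm⟩
  refine ⟨B, ⟨hBF, hB B hBF hxB le_rfl, fun P hP hBP => ?_⟩, hxB, hB⟩
  by_contra! hgood_between
  have hPbelow : GoodBelow F X x P := fun C hC hxC hCP =>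
    (hlam C hC B hBF x hxC hxB).elim (hB C hC hxC) fun hBC => hgood_between C hC hBC hCP
  exact hBP.not_subset (hmax ⟨hP, hBP.subset hxB, hPbelow⟩ hBP.le)

lemma eq_of_isWheel_of_subset {B₁ B₂ : Set U} (hw₁ : IsWheel F X B₁) (hB₂ : B₂ ∈ F)
    (hB₁₂ : B₁ ⊆ B₂) (hxB₁ : x ∈ B₁) (hbelow₂ : GoodBelow F X x B₂) : B₁ = B₂ := by
  by_contra hne
  obtain ⟨C, hC, hB₁C, hCB₂, hCbad⟩ := hw₁.2.2 B₂ hB₂ (hB₁₂.ssubset_of_ne hne)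
  exact hCbad (hbelow₂ C hC (hB₁C hxB₁) hCB₂)

lemma eq_of_isWheel (hlam : Laminar F) {B₁ B₂ : Set U} (hw₁ : IsWheel F X B₁)
    (hw₂ : IsWheel F X B₂) (hxB₁ : x ∈ B₁) (hxB₂ : x ∈ B₂) (hbelow₁ : GoodBelow F X x B₁)
    (hbelow₂ : GoodBelow F X x B₂) : B₁ = B₂ := by
  rcases hlam B₁ hw₁.1 B₂ hw₂.1 x hxB₁ hxB₂ with hB₁₂ | hB₂₁
  · exact eq_of_isWheel_of_subset hw₁ hw₂.1 hB₁₂ hxB₁ hbelow₂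
  · exact (eq_of_isWheel_of_subset hw₂ hw₁.1 hB₂₁ hxB₂ hbelow₁).symm

lemma mem_iff_exists_isWheel (hsat : Saturated F X) (hlam : Laminar F) (hF : F.Finite)
    (hU : univ ∈ F) : x ∈ X ↔ ∃ B, IsWheel F X B ∧ x ∈ B \ ⋃₀ holes F X B := by
  refine ⟨fun hxX => ?_, fun ⟨B, hB, hx⟩ => ?_⟩
  · obtain ⟨B, hB, hxB, hbelow⟩ := exists_isWheel_of_mem hsat hlam hF hU hxX
    exact ⟨B, hB, (mem_sdiff_sUnion_holes_iff hF hB.2.1).mpr ⟨hxB, hbelow⟩⟩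
  · obtain ⟨hxB, hbelow⟩ := (mem_sdiff_sUnion_holes_iff hF hB.2.1).mp hx
    exact mem_of_goodBelow hsat hlam hF hU hB.1 hxB hbelow

lemma disjoint_of_isWheel (hlam : Laminar F) (hF : F.Finite) {B₁ B₂ : Set U}
    (hw₁ : IsWheel F X B₁) (hw₂ : IsWheel F X B₂) (hne : B₁ ≠ B₂) :
    (B₁ \ ⋃₀ holes F X B₁) ∩ (B₂ \ ⋃₀ holes F X B₂) = ∅ := by
  refine eq_empty_iff_forall_notMem.mpr fun x ⟨hx₁, hx₂⟩ => hne ?_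
  obtain ⟨hxB₁, hbelow₁⟩ := (mem_sdiff_sUnion_holes_iff hF hw₁.2.1).mp hx₁
  obtain ⟨hxB₂, hbelow₂⟩ := (mem_sdiff_sUnion_holes_iff hF hw₂.2.1).mp hx₂
  exact eq_of_isWheel hlam hw₁ hw₂ hxB₁ hxB₂ hbelow₁ hbelow₂

end SwissCheese

open SwissCheese in
/-- Every constructible set admits a swiss cheese decomposition. -/
theorem stmt4 (𝓑 : Set (Set U)) (h : DirFam 𝓑) (hU : (Set.univ : Set U) ∈ 𝓑)
    (X : Set U) (hX : Constr 𝓑 X) :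
    ∃ (n : ℕ) (A : Fin n → Set U) (H : Fin n → Set (Set U)), IsSCD 𝓑 X n A H := by
  obtain ⟨F, hF𝓑, hF, hUF, hsat⟩ := hX.exists_finite_saturated hU
  have hlam := h.laminar_of_subset hF𝓑
  have hW : {B | IsWheel F X B}.Finite := hF.subset fun B hB => hB.1
  let e := hW.toFinset.equivFin.symm
  have hwheel (i) : IsWheel F X (e i) := hW.mem_toFinset.mp (e i).2
  refine ⟨_, fun i => e i, fun i => holes F X (e i), fun i => hF𝓑 (hwheel i).1,
    fun _ => hF.subset holes_subset, fun _ => holes_subset.trans hF𝓑,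
    fun _ _ => ssubset_of_mem_holes, fun _ _ hB _ hC => not_subset_of_mem_holes hB hC,
    fun i j hij => disjoint_of_isWheel hlam hF (hwheel i) (hwheel j) fun heq =>
      hij (e.injective (Subtype.ext heq)),
    fun i _ hmem => not_good_of_mem_holes hmem (hwheel i).2.1, ?_⟩
  ext x
  rw [mem_iff_exists_isWheel hsat hlam hF hUF, mem_iUnion]
  refine ⟨fun ⟨i, hx⟩ => ⟨e i, hwheel i, hx⟩, fun ⟨B, hB, hx⟩ => ?_⟩
  exact ⟨e.symm ⟨B, hW.mem_toFinset.mpr hB⟩, by simpa using hx⟩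
end

section
/- If S₁ = A₁ \ (B₁ ∪ … ∪ B_r) and S₂ = A₂ \ (C₁ ∪ … ∪ C_s) are two swiss cheeses in a directed family with S₁ ∩ S₂ ≠ ∅, then A₁ ⊆ A₂ or A₂ ⊆ A₁, and S₁ ∪ S₂ is again a swiss cheese with wheel the larger of A₁, A₂. -/
variable {U : Type*}

/-!
The holes of the union are those holes of either cheese that miss both cheeses. A point `x`
of `A₁` outside both cheeses lies in a hole `B` of the first one. If `B` meets the second
cheese, then `B` meets `A₂` and cannot contain `A₂` (that would swallow a common point of the
cheeses), so `B ⊆ A₂`; hence `x` lies in a hole `C` of the second cheese, and `C ⊆ B` since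
`B ⊆ C` would put a point of the second cheese into `C`. Then `C` misses both cheeses.
-/

namespace DirFam

variable {𝓑 : Set (Set U)}

lemma subset_or_subset_of_mem_of_mem (h : DirFam 𝓑) {B₀ B₁ : Set U} (h₀ : B₀ ∈ 𝓑)
    (h₁ : B₁ ∈ 𝓑) {x : U} (hx₀ : x ∈ B₀) (hx₁ : x ∈ B₁) : B₀ ⊆ B₁ ∨ B₁ ⊆ B₀ := by
  rcases h.2 B₀ h₀ B₁ h₁ with h' | h' | h'
  · exact .inl h'
  · exact .inr h'
  · exact absurd (h' ▸ ⟨hx₀, hx₁⟩ : x ∈ (∅ : Set U)) id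

lemma disjoint_diff_sUnion_of_mem {A B : Set U} {H : Set (Set U)} (hB : B ∈ H) :
    Disjoint B (A \ ⋃₀ H) :=
  Set.disjoint_left.2 fun _ hxB hx => hx.2 ⟨B, hB, hxB⟩

lemma exists_mem_hole_disjoint_union (h : DirFam 𝓑) {A₁ A₂ : Set U} (hA₂ : A₂ ∈ 𝓑)
    {H₁ H₂ : Set (Set U)} (hs₁ : H₁ ⊆ 𝓑) (hs₂ : H₂ ⊆ 𝓑) {z : U}
    (hz₁ : z ∈ A₁ \ ⋃₀ H₁) (hz₂ : z ∈ A₂) {x : U} (hx : x ∈ A₁)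
    (hxS : x ∉ (A₁ \ ⋃₀ H₁) ∪ (A₂ \ ⋃₀ H₂)) :
    ∃ D ∈ H₁ ∪ H₂, x ∈ D ∧ Disjoint D ((A₁ \ ⋃₀ H₁) ∪ (A₂ \ ⋃₀ H₂)) := by
  obtain ⟨B, hB, hxB⟩ : x ∈ ⋃₀ H₁ := by_contra fun hx₁ => hxS (.inl ⟨hx, hx₁⟩)
  have hBS₁ : Disjoint B (A₁ \ ⋃₀ H₁) := disjoint_diff_sUnion_of_mem hB
  by_cases hBS₂ : Disjoint B (A₂ \ ⋃₀ H₂)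
  · exact ⟨B, .inl hB, hxB, hBS₁.union_right hBS₂⟩
  obtain ⟨y, hyB, hyS₂⟩ := Set.not_disjoint_iff.1 hBS₂
  have hBA₂ : B ⊆ A₂ := (h.subset_or_subset_of_mem_of_mem (hs₁ hB) hA₂ hyB hyS₂.1).resolve_right
    fun hA₂B => hz₁.2 ⟨B, hB, hA₂B hz₂⟩
  obtain ⟨C, hC, hxC⟩ : x ∈ ⋃₀ H₂ := by_contra fun hx₂ => hxS (.inr ⟨hBA₂ hxB, hx₂⟩)
  have hCB : C ⊆ B := (h.subset_or_subset_of_mem_of_mem (hs₂ hC) (hs₁ hB) hxC hxB).resolve_right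
    fun hBC => hyS₂.2 ⟨C, hC, hBC hyB⟩
  exact ⟨C, .inr hC, hxC, (hBS₁.mono_left hCB).union_right (disjoint_diff_sUnion_of_mem hC)⟩

lemma union_diff_sUnion_eq (h : DirFam 𝓑) {A₁ A₂ : Set U} (hA₁ : A₁ ∈ 𝓑) (hA₂ : A₂ ∈ 𝓑)
    {H₁ H₂ : Set (Set U)} (hs₁ : H₁ ⊆ 𝓑) (hs₂ : H₂ ⊆ 𝓑) {z : U}
    (hz₁ : z ∈ A₁ \ ⋃₀ H₁) (hz₂ : z ∈ A₂ \ ⋃₀ H₂) :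
    (A₁ \ ⋃₀ H₁) ∪ (A₂ \ ⋃₀ H₂) =
      (A₁ ∪ A₂) \ ⋃₀ {D ∈ H₁ ∪ H₂ | Disjoint D ((A₁ \ ⋃₀ H₁) ∪ (A₂ \ ⋃₀ H₂))} := by
  ext x
  constructor
  · intro hxS
    refine ⟨Set.union_subset_union Set.sdiff_subset Set.sdiff_subset hxS, ?_⟩
    rintro ⟨D, ⟨-, hDS⟩, hxD⟩
    exact Set.disjoint_left.1 hDS hxD hxS
  · rintro ⟨hx | hx, hxH⟩ <;> by_contra hxS
    · obtain ⟨D, hD, hxD, hDS⟩ :=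
        h.exists_mem_hole_disjoint_union hA₂ hs₁ hs₂ hz₁ hz₂.1 hx hxS
      exact hxH ⟨D, ⟨hD, hDS⟩, hxD⟩
    · rw [Set.union_comm] at hxS
      obtain ⟨D, hD, hxD, hDS⟩ :=
        h.exists_mem_hole_disjoint_union hA₁ hs₂ hs₁ hz₂ hz₁.1 hx hxS
      exact hxH ⟨D, ⟨Set.union_comm H₁ H₂ ▸ hD, Set.union_comm (A₁ \ _) _ ▸ hDS⟩, hxD⟩

end DirFam

theorem stmt5_general (𝓑 : Set (Set U)) (h : DirFam 𝓑)
    (A₁ A₂ : Set U) (hA₁ : A₁ ∈ 𝓑) (hA₂ : A₂ ∈ 𝓑)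
    (H₁ H₂ : Set (Set U)) (hf₁ : H₁.Finite) (hf₂ : H₂.Finite)
    (hs₁ : H₁ ⊆ 𝓑) (hs₂ : H₂ ⊆ 𝓑)
    (hp₁ : ∀ B ∈ H₁, B ⊂ A₁) (hp₂ : ∀ B ∈ H₂, B ⊂ A₂)
    (hne : ((A₁ \ ⋃₀ H₁) ∩ (A₂ \ ⋃₀ H₂)).Nonempty) :
    (A₁ ⊆ A₂ ∨ A₂ ⊆ A₁) ∧
      ∃ H : Set (Set U), H.Finite ∧ H ⊆ 𝓑 ∧ (∀ B ∈ H, B ⊂ A₁ ∪ A₂) ∧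
        (A₁ \ ⋃₀ H₁) ∪ (A₂ \ ⋃₀ H₂) = (A₁ ∪ A₂) \ ⋃₀ H := by
  obtain ⟨z, hz₁, hz₂⟩ := hne
  refine ⟨h.subset_or_subset_of_mem_of_mem hA₁ hA₂ hz₁.1 hz₂.1,
    {D ∈ H₁ ∪ H₂ | Disjoint D ((A₁ \ ⋃₀ H₁) ∪ (A₂ \ ⋃₀ H₂))},
    (hf₁.union hf₂).subset (Set.sep_subset _ _), fun D hD => Set.union_subset hs₁ hs₂ hD.1,
    ?_, h.union_diff_sUnion_eq hA₁ hA₂ hs₁ hs₂ hz₁ hz₂⟩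
  rintro D ⟨hD, hDS⟩
  have hDA : D ⊆ A₁ ∪ A₂ := hD.elim (fun hD₁ => (hp₁ D hD₁).1.trans Set.subset_union_left)
    (fun hD₂ => (hp₂ D hD₂).1.trans Set.subset_union_right)
  exact (Set.ssubset_iff_of_subset hDA).2
    ⟨z, .inl hz₁.1, fun hzD => Set.disjoint_left.1 hDS hzD (.inl hz₁)⟩

/-- Two intersecting swiss cheeses have nested wheels, and their union is a swiss
cheese whose wheel is the larger of the two wheels. -/
theorem stmt5 (𝓑 : Set (Set U)) (h : DirFam 𝓑)
    (A₁ A₂ : Set U) (hA₁ : A₁ ∈ 𝓑) (hA₂ : A₂ ∈ 𝓑)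
    (H₁ H₂ : Set (Set U)) (hf₁ : H₁.Finite) (hf₂ : H₂.Finite)
    (hs₁ : H₁ ⊆ 𝓑) (hs₂ : H₂ ⊆ 𝓑)
    (hp₁ : ∀ B ∈ H₁, B ⊂ A₁) (hp₂ : ∀ B ∈ H₂, B ⊂ A₂)
    (hd₁ : ∀ B ∈ H₁, ∀ C ∈ H₁, B ≠ C → B ∩ C = ∅)
    (hd₂ : ∀ B ∈ H₂, ∀ C ∈ H₂, B ≠ C → B ∩ C = ∅)
    (hne : ((A₁ \ ⋃₀ H₁) ∩ (A₂ \ ⋃₀ H₂)).Nonempty) :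
    (A₁ ⊆ A₂ ∨ A₂ ⊆ A₁) ∧
      ∃ H : Set (Set U), H.Finite ∧ H ⊆ 𝓑 ∧ (∀ B ∈ H, B ⊂ A₁ ∪ A₂) ∧
        (A₁ \ ⋃₀ H₁) ∪ (A₂ \ ⋃₀ H₂) = (A₁ ∪ A₂) \ ⋃₀ H :=
  stmt5_general 𝓑 h A₁ A₂ hA₁ hA₂ H₁ H₂ hf₁ hf₂ hs₁ hs₂ hp₁ hp₂ hne
end

section
/- Let 𝓑 be a directed family with U ∈ 𝓑. If 𝓑 is unpackable (no ball is a finite union of proper sub-balls) and A, B₁,…,B_n are balls with A ⊆ B₁ ∪ … ∪ B_n, then A ⊆ B_i for some i. -/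
variable {U : Type*}

/-- Unpackable: no ball is a finite union of proper sub-balls. -/
def Unpackable (𝓑 : Set (Set U)) : Prop :=
  ∀ A ∈ 𝓑, ∀ H : Set (Set U), H.Finite → H ⊆ 𝓑 → (∀ B ∈ H, B ⊂ A) → A ≠ ⋃₀ H

/-- In an unpackable directed family, a ball covered by finitely many balls is
contained in one of them. -/
theorem stmt6 (𝓑 : Set (Set U)) (h : DirFam 𝓑) (hU : (Set.univ : Set U) ∈ 𝓑)
    (hunp : Unpackable 𝓑) (A : Set U) (hA : A ∈ 𝓑)
    (n : ℕ) (B : Fin n → Set U) (hB : ∀ i, B i ∈ 𝓑)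
    (hcov : A ⊆ ⋃ i, B i) :
    ∃ i, A ⊆ B i := by
  by_contra hno
  push_neg at hno
  set H : Set (Set U) := {S | (∃ i, S = B i) ∧ S ⊂ A} with hH
  have hHfin : H.Finite := Set.Finite.subset (Set.finite_range B)
    (fun S hS => by obtain ⟨⟨i, hi⟩, _⟩ := hS; exact ⟨i, hi.symm⟩)
  have hHsub : H ⊆ 𝓑 := fun S hS => by
    obtain ⟨⟨i, hi⟩, _⟩ := hS; rw [hi]; exact hB i
  have hprop : ∀ S ∈ H, S ⊂ A := fun S hS => hS.2
  apply hunp A hA H hHfin hHsub hprop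
  apply Set.Subset.antisymm
  · intro x hx
    obtain ⟨_, ⟨i, rfl⟩, hxB⟩ := hcov hx
    rcases h.2 A hA (B i) (hB i) with h1 | h2 | h3
    · exact absurd h1 (hno i)
    · refine ⟨B i, ⟨⟨i, rfl⟩, lt_of_le_of_ne h2 ?_⟩, hxB⟩
      rintro rfl
      exact hno i h2
    · exact absurd (Set.mem_inter hx hxB) (by rw [h3]; exact not_false)
  · intro x hx
    obtain ⟨S, hS, hxS⟩ := hx
    exact hS.2.1 hxS
end

section
/- Let 𝓑 be a directed family with U ∈ 𝓑 such that every ball covered by finitely many balls is contained in one of them. If a swiss cheese S has two presentations S = A₁ \ (B_{1,1} ∪ … ∪ B_{1,m}) = A₂ \ (B_{2,1} ∪ … ∪ B_{2,n}) with holes pairwise disjoint in each presentation, then A₁ = A₂ and {B_{1,1},…,B_{1,m}} = {B_{2,1},…,B_{2,n}}. -/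
variable {U : Type*}

/-- Under the covering property, a swiss cheese with pairwise disjoint holes has a
uniquely determined wheel and set of holes. -/
theorem stmt7 (𝓑 : Set (Set U)) (h : DirFam 𝓑) (hU : (Set.univ : Set U) ∈ 𝓑)
    (hcov : ∀ A ∈ 𝓑, ∀ (n : ℕ) (B : Fin n → Set U),
      (∀ i, B i ∈ 𝓑) → A ⊆ ⋃ i, B i → ∃ i, A ⊆ B i)
    (A₁ A₂ : Set U) (hA₁ : A₁ ∈ 𝓑) (hA₂ : A₂ ∈ 𝓑)
    (H₁ H₂ : Set (Set U)) (hf₁ : H₁.Finite) (hf₂ : H₂.Finite)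
    (hs₁ : H₁ ⊆ 𝓑) (hs₂ : H₂ ⊆ 𝓑)
    (hp₁ : ∀ B ∈ H₁, B ⊂ A₁) (hp₂ : ∀ B ∈ H₂, B ⊂ A₂)
    (hd₁ : ∀ B ∈ H₁, ∀ C ∈ H₁, B ≠ C → B ∩ C = ∅)
    (hd₂ : ∀ B ∈ H₂, ∀ C ∈ H₂, B ≠ C → B ∩ C = ∅)
    (heq : A₁ \ ⋃₀ H₁ = A₂ \ ⋃₀ H₂) :
    A₁ = A₂ ∧ H₁ = H₂ := by
  -- covering property for finite set-families
  have cov : ∀ A ∈ 𝓑, ∀ T : Set (Set U), T.Finite → T ⊆ 𝓑 → A ⊆ ⋃₀ T →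
      ∃ B ∈ T, A ⊆ B := by
    intro A hA T hT hTs hsub
    haveI := hT.fintype
    obtain ⟨i, hi⟩ := hcov A hA (Fintype.card T)
      (fun i => ((Fintype.equivFin T).symm i : Set U))
      (fun i => hTs ((Fintype.equivFin T).symm i).2)
      (by
        intro x hx
        obtain ⟨B, hB, hxB⟩ := hsub hx
        exact Set.mem_iUnion.2 ⟨Fintype.equivFin T ⟨B, hB⟩, by simpa using hxB⟩)
    exact ⟨_, ((Fintype.equivFin T).symm i).2, hi⟩
  -- one inclusion of the wheels
  have sub : ∀ (Aa Ab : Set U), Aa ∈ 𝓑 → Ab ∈ 𝓑 → ∀ Ha Hb : Set (Set U), Ha.Finite →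
      Ha ⊆ 𝓑 → (∀ B ∈ Ha, B ⊂ Aa) → Aa \ ⋃₀ Ha = Ab \ ⋃₀ Hb → Aa ⊆ Ab := by
    intro Aa Ab hAa hAb Ha Hb hfa hsa hpa he
    have hins : Aa ⊆ ⋃₀ insert Ab Ha := by
      intro x hx
      by_cases hxh : x ∈ ⋃₀ Ha
      · obtain ⟨B, hB, hxB⟩ := hxh
        exact ⟨B, Set.mem_insert_of_mem _ hB, hxB⟩
      · have : x ∈ Ab \ ⋃₀ Hb := he ▸ ⟨hx, hxh⟩
        exact ⟨Ab, Set.mem_insert _ _, this.1⟩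
    obtain ⟨B, hB, hAB⟩ := cov Aa hAa (insert Ab Ha) (hfa.insert _)
      (by
        intro B hB
        rcases hB with rfl | hB
        · exact hAb
        · exact hsa hB) hins
    rcases hB with rfl | hB
    · exact hAB
    · exact absurd hAB (hpa B hB).not_subset
  have hAeq : A₁ = A₂ :=
    Set.Subset.antisymm (sub A₁ A₂ hA₁ hA₂ H₁ H₂ hf₁ hs₁ hp₁ heq)
      (sub A₂ A₁ hA₂ hA₁ H₂ H₁ hf₂ hs₂ hp₂ heq.symm)
  -- each hole of one presentation is contained in a hole of the other
  have key : ∀ (Aa Ab : Set U), Aa = Ab → ∀ Ha Hb : Set (Set U), Hb.Finite →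
      Ha ⊆ 𝓑 → Hb ⊆ 𝓑 → (∀ B ∈ Ha, B ⊂ Aa) → Aa \ ⋃₀ Ha = Ab \ ⋃₀ Hb →
      ∀ B ∈ Ha, ∃ C ∈ Hb, B ⊆ C := by
    intro Aa Ab hab Ha Hb hfb hsa hsb hpa he B hB
    have hBsub : B ⊆ ⋃₀ Hb := by
      intro x hxB
      have hxAa : x ∈ Aa := (hpa B hB).1 hxB
      have hxn : x ∉ Aa \ ⋃₀ Ha := fun hx => hx.2 ⟨B, hB, hxB⟩
      rw [he] at hxn
      by_contra hc
      exact hxn ⟨hab ▸ hxAa, hc⟩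
    exact cov B (hsa hB) Hb hfb hsb hBsub
  refine ⟨hAeq, Set.Subset.antisymm ?_ ?_⟩
  · intro B hB
    obtain ⟨C, hC, hBC⟩ := key A₁ A₂ hAeq H₁ H₂ hf₂ hs₁ hs₂ hp₁ heq B hB
    obtain ⟨D, hD, hCD⟩ := key A₂ A₁ hAeq.symm H₂ H₁ hf₁ hs₂ hs₁ hp₂ heq.symm C hC
    have hBD : B = D := by
      by_contra hne
      obtain ⟨x, hx⟩ := h.1 B (hs₁ hB)
      exact absurd (hd₁ B hB D hD hne) (Set.Nonempty.ne_empty ⟨x, hx, hCD (hBC hx)⟩)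
    have : B = C := Set.Subset.antisymm hBC (hBD ▸ hCD)
    exact this ▸ hC
  · intro C hC
    obtain ⟨D, hD, hCD⟩ := key A₂ A₁ hAeq.symm H₂ H₁ hf₁ hs₂ hs₁ hp₂ heq.symm C hC
    obtain ⟨E, hE, hDE⟩ := key A₁ A₂ hAeq H₁ H₂ hf₂ hs₁ hs₂ hp₁ heq D hD
    have hCE : C = E := by
      by_contra hne
      obtain ⟨x, hx⟩ := h.1 C (hs₂ hC)
      exact absurd (hd₂ C hC E hE hne) (Set.Nonempty.ne_empty ⟨x, hx, hDE (hCD hx)⟩)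
    have : C = D := Set.Subset.antisymm hCD (hCE ▸ hDE)
    exact this ▸ hD
end

section
/- Let 𝓑 be a directed family with U ∈ 𝓑 such that every swiss cheese has uniquely determined wheel and (pairwise disjoint) holes. Then 𝓑 is unpackable: no ball is a finite union of proper sub-balls. -/
/-! If a ball `A` were the union of finitely many proper sub-balls, the maximal ones among them
would be pairwise disjoint (the family is directed) and would still cover `A`. Removing all of
them but one, `B₀`, from `A` leaves exactly `B₀`; so `A` with those holes and `B₀` without holes
are two presentations of the same swiss cheese, and uniqueness forces `A = B₀ ⊊ A`. -/

variable {U : Type*}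

theorem Set.Finite.sUnion_setOf_maximal {H : Set (Set U)} (hH : H.Finite) :
    ⋃₀ {B | Maximal (· ∈ H) B} = ⋃₀ H := by
  refine subset_antisymm (Set.sUnion_mono fun B hB => hB.prop) ?_
  rintro x ⟨B, hB, hxB⟩
  obtain ⟨C, hBC, hC⟩ := hH.exists_le_maximal hB
  exact ⟨C, hC, hBC hxB⟩

theorem DirFam.inter_eq_empty_of_maximal {𝓑 H : Set (Set U)} (h𝓑 : DirFam 𝓑) (hH : H ⊆ 𝓑)
    {B C : Set U} (hB : Maximal (· ∈ H) B) (hC : Maximal (· ∈ H) C) (hBC : B ≠ C) :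
    B ∩ C = ∅ := by
  rcases h𝓑.2 B (hH hB.prop) C (hH hC.prop) with hsub | hsub | hdisj
  · exact absurd (hB.eq_of_subset hC.prop hsub) hBC
  · exact absurd (hC.eq_of_subset hB.prop hsub).symm hBC
  · exact hdisj

theorem sUnion_diff_sUnion_diff_singleton {K : Set (Set U)} {B₀ : Set U} (hB₀ : B₀ ∈ K)
    (hK : ∀ B ∈ K, ∀ C ∈ K, B ≠ C → B ∩ C = ∅) :
    ⋃₀ K \ ⋃₀ (K \ {B₀}) = B₀ := by
  apply subset_antisymm
  · rintro y ⟨⟨C, hC, hyC⟩, hy⟩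
    by_contra hyB₀
    exact hy ⟨C, ⟨hC, fun hCB₀ => hyB₀ (hCB₀ ▸ hyC)⟩, hyC⟩
  · intro y hy
    refine ⟨⟨B₀, hB₀, hy⟩, ?_⟩
    rintro ⟨C, ⟨hC, hCB₀⟩, hyC⟩
    have hdisj := hK B₀ hB₀ C hC (Ne.symm hCB₀)
    exact Set.eq_empty_iff_forall_notMem.mp hdisj y ⟨hy, hyC⟩

theorem stmt8_general (𝓑 : Set (Set U)) (h : DirFam 𝓑)
    (huniq : ∀ A₁ ∈ 𝓑, ∀ A₂ ∈ 𝓑, ∀ H₁ H₂ : Set (Set U),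
      H₁.Finite → H₂.Finite → H₁ ⊆ 𝓑 → H₂ ⊆ 𝓑 →
      (∀ B ∈ H₁, B ⊂ A₁) → (∀ B ∈ H₂, B ⊂ A₂) →
      (∀ B ∈ H₁, ∀ C ∈ H₁, B ≠ C → B ∩ C = ∅) →
      (∀ B ∈ H₂, ∀ C ∈ H₂, B ≠ C → B ∩ C = ∅) →
      A₁ \ ⋃₀ H₁ = A₂ \ ⋃₀ H₂ → A₁ = A₂ ∧ H₁ = H₂) :
    Unpackable 𝓑 := by
  rintro A hA H hHfin hH𝓑 hHA hAH
  set K := {B | Maximal (· ∈ H) B}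
  have hKH : K ⊆ H := fun B hB => hB.prop
  have hKA : ⋃₀ K = A := by rw [hAH, hHfin.sUnion_setOf_maximal]
  have hKdisj : ∀ B ∈ K, ∀ C ∈ K, B ≠ C → B ∩ C = ∅ :=
    fun B hB C hC => h.inter_eq_empty_of_maximal hH𝓑 hB hC
  obtain ⟨-, B₀, hB₀, -⟩ : (⋃₀ K).Nonempty := hKA ▸ h.1 A hA
  have hcheese : A \ ⋃₀ (K \ {B₀}) = B₀ \ ⋃₀ (∅ : Set (Set U)) := by
    rw [Set.sUnion_empty, Set.sdiff_empty, ← hKA, sUnion_diff_sUnion_diff_singleton hB₀ hKdisj]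
  have hAB₀ := (huniq A hA B₀ (hH𝓑 (hKH hB₀)) (K \ {B₀}) ∅
    (hHfin.subset hKH).sdiff Set.finite_empty
    (fun B hB => hH𝓑 (hKH hB.1)) (Set.empty_subset _)
    (fun B hB => hHA B (hKH hB.1)) (fun _ hB => absurd hB (Set.notMem_empty _))
    (fun B hB C hC => hKdisj B hB.1 C hC.1) (fun _ hB => absurd hB (Set.notMem_empty _))
    hcheese).1
  exact (hHA B₀ (hKH hB₀)).ne' hAB₀

/-- If every swiss cheese (with pairwise disjoint holes) has uniquely determined wheel
and holes, then the family is unpackable. -/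
theorem stmt8 (𝓑 : Set (Set U)) (h : DirFam 𝓑) (hU : (Set.univ : Set U) ∈ 𝓑)
    (huniq : ∀ A₁ ∈ 𝓑, ∀ A₂ ∈ 𝓑, ∀ H₁ H₂ : Set (Set U),
      H₁.Finite → H₂.Finite → H₁ ⊆ 𝓑 → H₂ ⊆ 𝓑 →
      (∀ B ∈ H₁, B ⊂ A₁) → (∀ B ∈ H₂, B ⊂ A₂) →
      (∀ B ∈ H₁, ∀ C ∈ H₁, B ≠ C → B ∩ C = ∅) →
      (∀ B ∈ H₂, ∀ C ∈ H₂, B ≠ C → B ∩ C = ∅) →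
      A₁ \ ⋃₀ H₁ = A₂ \ ⋃₀ H₂ → A₁ = A₂ ∧ H₁ = H₂) :
    Unpackable 𝓑 :=
  stmt8_general 𝓑 h huniq
end

section
/- Let 𝓑 be an unpackable directed family with U ∈ 𝓑. Then every constructible X ⊆ U has a unique swiss cheese decomposition: if S₁,…,S_r and T₁,…,T_s are both pairwise disjoint families of swiss cheeses with union X, no wheel of one cheese equal to a hole of another, then {S₁,…,S_r} = {T₁,…,T_s}. -/
variable {U : Type*}

/-!
A ball `A` of an unpackable directed family has *generic points* with respect to any finite
set `F` of balls: points of `A` lying in no member of `F` strictly inside `A`. Such a point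
sees only the balls containing all of `A`, which lets us compare two decompositions wheel by
wheel, from the largest wheels down. Given a cheese `S` of the first decomposition, a generic
point of `S` lies in a cheese `T` of the second one whose wheel contains that of `S`. If it is
strictly larger, `T` is already matched with a cheese of the first decomposition, which must be
`S` by disjointness. If the wheels are equal and some point of `S` lies in a hole `C` of `T`,
then a generic point of `C` lies in a cheese of the second decomposition whose wheel contains
`C`, and both possible positions of that wheel are absurd: inside the wheel of `T` it lies in a
hole of `T`, which by incomparability is `C`, so a wheel would be a hole; beyond it, its cheese is
already matched with `S`, whose wheel is smaller.
-/

section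

variable {𝓑 : Set (Set U)}

theorem DirFam.subset_or_subset_of_mem (h : DirFam 𝓑) {B C : Set U} (hB : B ∈ 𝓑) (hC : C ∈ 𝓑)
    {x : U} (hxB : x ∈ B) (hxC : x ∈ C) : B ⊆ C ∨ C ⊆ B := by
  rcases h.2 B hB C hC with hBC | hCB | hBC
  · exact .inl hBC
  · exact .inr hCB
  · exact (Set.eq_empty_iff_forall_notMem.1 hBC x ⟨hxB, hxC⟩).elim

theorem Unpackable.exists_generic_point (hunp : Unpackable 𝓑) (h : DirFam 𝓑) {A : Set U}
    (hA : A ∈ 𝓑) {F : Set (Set U)} (hF : F.Finite) (hF𝓑 : F ⊆ 𝓑) :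
    ∃ x ∈ A, ∀ B ∈ F, x ∈ B → A ⊆ B := by
  set G := {B ∈ F | B ⊂ A}
  obtain ⟨x, hxA, hxG⟩ : (A \ ⋃₀ G).Nonempty := by
    refine Set.sdiff_nonempty.2 fun hAG => hunp A hA G (hF.subset (Set.sep_subset _ _))
      (fun B hB => hF𝓑 hB.1) (fun B hB => hB.2) (hAG.antisymm ?_)
    exact Set.sUnion_subset fun B hB => hB.2.1
  refine ⟨x, hxA, fun B hB hxB => ?_⟩
  rcases h.subset_or_subset_of_mem (hF𝓑 hB) hA hxB hxA with hBA | hAB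
  · by_contra hAB
    exact hxG ⟨B, ⟨hB, hBA, hAB⟩, hxB⟩
  · exact hAB

/-- `A \ ⋃₀ H` is a swiss cheese with wheel `A` and holes `H`, except that the holes need not be
pairwise incomparable. -/
structure IsCheese_s9 (𝓑 : Set (Set U)) (A : Set U) (H : Set (Set U)) : Prop where
  wheel_mem : A ∈ 𝓑
  finite_holes : H.Finite
  holes_subset : H ⊆ 𝓑
  ssubset_wheel : ∀ B ∈ H, B ⊂ A

namespace IsCheese_s9

variable {A A' : Set U} {H H' : Set (Set U)}

theorem exists_generic_point (hc : IsCheese_s9 𝓑 A H) (h : DirFam 𝓑) (hunp : Unpackable 𝓑)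
    {F : Set (Set U)} (hF : F.Finite) (hF𝓑 : F ⊆ 𝓑) :
    ∃ x ∈ A \ ⋃₀ H, ∀ B ∈ F, x ∈ B → A ⊆ B := by
  obtain ⟨x, hxA, hx⟩ :=
    hunp.exists_generic_point h hc.wheel_mem (hF.union hc.finite_holes)
      (Set.union_subset hF𝓑 hc.holes_subset)
  refine ⟨x, ⟨hxA, ?_⟩, fun B hB => hx B (.inl hB)⟩
  rintro ⟨B, hB, hxB⟩
  exact (hc.ssubset_wheel B hB).2 (hx B (.inr hB) hxB)

theorem subset_of_diff_subset (hc : IsCheese_s9 𝓑 A H) (h : DirFam 𝓑) (hunp : Unpackable 𝓑)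
    {B : Set U} (hB : B ∈ 𝓑) (hAB : A \ ⋃₀ H ⊆ B) : A ⊆ B := by
  obtain ⟨x, hx, hxB⟩ :=
    hc.exists_generic_point h hunp (Set.finite_singleton B) (Set.singleton_subset_iff.2 hB)
  exact hxB B rfl (hAB hx)

theorem eq_of_diff_eq (hc : IsCheese_s9 𝓑 A H) (hc' : IsCheese_s9 𝓑 A' H') (h : DirFam 𝓑)
    (hunp : Unpackable 𝓑) (he : A \ ⋃₀ H = A' \ ⋃₀ H') : A = A' :=
  (hc.subset_of_diff_subset h hunp hc'.wheel_mem (he ▸ Set.sdiff_subset)).antisymm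
    (hc'.subset_of_diff_subset h hunp hc.wheel_mem (he ▸ Set.sdiff_subset))

end IsCheese_s9

namespace IsSCD

variable {X : Set U} {n m : ℕ} {A : Fin n → Set U} {H : Fin n → Set (Set U)}
  {A' : Fin m → Set U} {H' : Fin m → Set (Set U)}

theorem isCheese (hs : IsSCD 𝓑 X n A H) (i : Fin n) : IsCheese_s9 𝓑 (A i) (H i) :=
  ⟨hs.1 i, hs.2.1 i, hs.2.2.1 i, hs.2.2.2.1 i⟩

theorem eq_of_mem_holes_of_subset (hs : IsSCD 𝓑 X n A H) {i : Fin n} {B C : Set U}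
    (hB : B ∈ H i) (hC : C ∈ H i) (hBC : B ⊆ C) : B = C :=
  by_contra fun hne => hs.2.2.2.2.1 i B hB C hC hne hBC

theorem eq_of_mem_cheese (hs : IsSCD 𝓑 X n A H) {i k : Fin n} {x : U}
    (hi : x ∈ A i \ ⋃₀ H i) (hk : x ∈ A k \ ⋃₀ H k) : i = k :=
  by_contra fun hne => Set.eq_empty_iff_forall_notMem.1 (hs.2.2.2.2.2.1 i k hne) x ⟨hi, hk⟩

theorem wheel_notMem_holes (hs : IsSCD 𝓑 X n A H) (i j : Fin n) : A i ∉ H j :=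
  hs.2.2.2.2.2.2.1 i j

theorem cheese_subset (hs : IsSCD 𝓑 X n A H) (i : Fin n) : A i \ ⋃₀ H i ⊆ X :=
  hs.2.2.2.2.2.2.2 ▸ Set.subset_iUnion (fun i => A i \ ⋃₀ H i) i

theorem exists_mem_cheese (hs : IsSCD 𝓑 X n A H) {x : U} (hx : x ∈ X) :
    ∃ i, x ∈ A i \ ⋃₀ H i :=
  Set.mem_iUnion.1 (hs.2.2.2.2.2.2.2 ▸ hx)

theorem exists_hole_superset_of_subset (hs : IsSCD 𝓑 X n A H) (h : DirFam 𝓑)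
    (hunp : Unpackable 𝓑) {j k : Fin n} (hjk : j ≠ k) (hA : A j ⊆ A k) :
    ∃ D ∈ H k, A j ⊆ D := by
  obtain ⟨x, hx, hgen⟩ := (hs.isCheese j).exists_generic_point h hunp (hs.isCheese k).finite_holes
    (hs.isCheese k).holes_subset
  obtain ⟨D, hD, hxD⟩ : x ∈ ⋃₀ H k :=
    by_contra fun hxk => hjk (hs.eq_of_mem_cheese hx ⟨hA hx.1, hxk⟩)
  exact ⟨D, hD, hgen D hD hxD⟩

theorem cheese_subset_of_wheel_eq (h₁ : IsSCD 𝓑 X n A H) (h₂ : IsSCD 𝓑 X m A' H')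
    (h : DirFam 𝓑) (hunp : Unpackable 𝓑) {i : Fin n} {j : Fin m} (hij : A i = A' j)
    (ih : ∀ k, A' j ⊂ A' k → ∃ l, A l \ ⋃₀ H l = A' k \ ⋃₀ H' k) :
    A i \ ⋃₀ H i ⊆ A' j \ ⋃₀ H' j := by
  intro y hy
  refine ⟨hij ▸ hy.1, ?_⟩
  rintro ⟨C, hC, hyC⟩
  have hCA : C ⊆ A i := hij ▸ ((h₂.isCheese j).ssubset_wheel C hC).1
  obtain ⟨z, hzC, hz⟩ := hunp.exists_generic_point h ((h₂.isCheese j).holes_subset hC)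
    ((h₁.isCheese i).finite_holes.union (Set.finite_range A'))
    (Set.union_subset (h₁.isCheese i).holes_subset
      (Set.range_subset_iff.2 fun k => (h₂.isCheese k).wheel_mem))
  have hzi : z ∈ A i \ ⋃₀ H i :=
    ⟨hCA hzC, fun ⟨B, hB, hzB⟩ => hy.2 ⟨B, hB, hz B (.inl hB) hzB hyC⟩⟩
  obtain ⟨k, hzk⟩ := h₂.exists_mem_cheese (h₁.cheese_subset i hzi)
  have hCk : C ⊆ A' k := hz _ (.inr ⟨k, rfl⟩) hzk.1
  have hkj : k ≠ j := by
    rintro rfl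
    exact hzk.2 ⟨C, hC, hzC⟩
  by_cases hkj' : A' k ⊆ A' j
  · obtain ⟨D, hD, hkD⟩ := h₂.exists_hole_superset_of_subset h hunp hkj hkj'
    obtain rfl := h₂.eq_of_mem_holes_of_subset hC hD (hCk.trans hkD)
    exact h₂.wheel_notMem_holes k j (hkD.antisymm hCk ▸ hC)
  · have hjk : A' j ⊂ A' k := ⟨(h.subset_or_subset_of_mem (h₂.isCheese k).wheel_mem
      (h₂.isCheese j).wheel_mem hzk.1
      (hij ▸ hCA hzC)).resolve_left hkj', hkj'⟩
    obtain ⟨l, hkl⟩ := ih k hjk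
    obtain rfl := h₁.eq_of_mem_cheese hzi (hkl ▸ hzk)
    exact hjk.ne (hij ▸ ((h₂.isCheese k).eq_of_diff_eq (h₁.isCheese _) h hunp hkl.symm).symm)

theorem exists_cheese_eq (h₁ : IsSCD 𝓑 X n A H) (h₂ : IsSCD 𝓑 X m A' H') (h : DirFam 𝓑)
    (hunp : Unpackable 𝓑) (i : Fin n)
    (ih₁ : ∀ k, A i ⊂ A k → ∃ l, A' l \ ⋃₀ H' l = A k \ ⋃₀ H k)
    (ih₂ : ∀ j, A i ⊂ A' j → ∃ l, A l \ ⋃₀ H l = A' j \ ⋃₀ H' j) :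
    ∃ j, A' j \ ⋃₀ H' j = A i \ ⋃₀ H i := by
  obtain ⟨x, hx, hgen⟩ := (h₁.isCheese i).exists_generic_point h hunp (Set.finite_range A')
    (Set.range_subset_iff.2 fun j => (h₂.isCheese j).wheel_mem)
  obtain ⟨j, hxj⟩ := h₂.exists_mem_cheese (h₁.cheese_subset i hx)
  refine ⟨j, ?_⟩
  rcases (hgen _ ⟨j, rfl⟩ hxj.1).eq_or_ssubset with hij | hij
  · exact (h₂.cheese_subset_of_wheel_eq h₁ h hunp hij.symm fun k hk => ih₁ k (hij ▸ hk)).antisymm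
      (h₁.cheese_subset_of_wheel_eq h₂ h hunp hij fun k hk => ih₂ k (hij ▸ hk))
  · obtain ⟨l, hlj⟩ := ih₂ j hij
    obtain rfl := h₁.eq_of_mem_cheese hx (hlj ▸ hxj)
    exact hlj.symm

theorem range_cheese_eq (h₁ : IsSCD 𝓑 X n A H) (h₂ : IsSCD 𝓑 X m A' H')
    (h : DirFam 𝓑) (hunp : Unpackable 𝓑) :
    Set.range (fun i => A i \ ⋃₀ H i) = Set.range (fun j => A' j \ ⋃₀ H' j) := by
  have hW : (Set.range A ∪ Set.range A').WellFoundedOn (· > ·) :=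
    ((Set.finite_range A).union (Set.finite_range A')).wellFoundedOn
  have key : ∀ B ∈ Set.range A ∪ Set.range A',
      (∀ i, A i = B → ∃ j, A' j \ ⋃₀ H' j = A i \ ⋃₀ H i) ∧
      ∀ j, A' j = B → ∃ i, A i \ ⋃₀ H i = A' j \ ⋃₀ H' j := by
    intro B hB
    apply hW.induction hB
    intro B _ ih
    refine ⟨?_, ?_⟩
    · rintro i rfl
      exact h₁.exists_cheese_eq h₂ h hunp i (fun k hk => (ih _ (.inl ⟨k, rfl⟩) hk).1 k rfl)
        (fun k hk => (ih _ (.inr ⟨k, rfl⟩) hk).2 k rfl)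
    · rintro j rfl
      exact h₂.exists_cheese_eq h₁ h hunp j (fun k hk => (ih _ (.inr ⟨k, rfl⟩) hk).2 k rfl)
        (fun k hk => (ih _ (.inl ⟨k, rfl⟩) hk).1 k rfl)
  refine Set.Subset.antisymm (Set.range_subset_iff.2 fun i => ?_)
    (Set.range_subset_iff.2 fun j => ?_)
  · exact (key _ (.inl ⟨i, rfl⟩)).1 i rfl
  · exact (key _ (.inr ⟨j, rfl⟩)).2 j rfl

end IsSCD

end

theorem stmt9_general (𝓑 : Set (Set U)) (h : DirFam 𝓑)
    (hunp : Unpackable 𝓑) (X : Set U)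
    (n m : ℕ) (A : Fin n → Set U) (H : Fin n → Set (Set U))
    (A' : Fin m → Set U) (H' : Fin m → Set (Set U))
    (h₁ : IsSCD 𝓑 X n A H) (h₂ : IsSCD 𝓑 X m A' H') :
    Set.range (fun i => A i \ ⋃₀ H i) = Set.range (fun j => A' j \ ⋃₀ H' j) := by
  exact h₁.range_cheese_eq h₂ h hunp

/-- In an unpackable directed family, swiss cheese decompositions are unique: the two
collections of swiss cheeses coincide. -/
theorem stmt9 (𝓑 : Set (Set U)) (h : DirFam 𝓑) (hU : (Set.univ : Set U) ∈ 𝓑)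
    (hunp : Unpackable 𝓑) (X : Set U) (hX : Constr 𝓑 X)
    (n m : ℕ) (A : Fin n → Set U) (H : Fin n → Set (Set U))
    (A' : Fin m → Set U) (H' : Fin m → Set (Set U))
    (h₁ : IsSCD 𝓑 X n A H) (h₂ : IsSCD 𝓑 X m A' H') :
    Set.range (fun i => A i \ ⋃₀ H i) = Set.range (fun j => A' j \ ⋃₀ H' j) :=
  stmt9_general 𝓑 h hunp X n m A H A' H' h₁ h₂
end

section
/- If 𝓑 is an unpackable directed family with U ∈ 𝓑, then for every constructible X ⊆ U there is a unique finite set 𝓢 of balls with X = Ch(𝓢), where Ch takes the union over balls B on even levels of the forest (𝓢, ⊆) of B minus the union of its immediate predecessors in 𝓢. -/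
variable {U : Type*}

/-- Levels of a (finite) subset of a partial order: Lev 0 is the set of maximal
elements, and Lev (n+1) is Lev n of the set with its maximal elements removed. -/
def Lev {α : Type*} [PartialOrder α] : ℕ → Set α → Set α
  | 0, S => {a | a ∈ S ∧ ∀ b ∈ S, a ≤ b → a = b}
  | n + 1, S => Lev n (S \ {a | a ∈ S ∧ ∀ b ∈ S, a ≤ b → a = b})

/-- The swiss cheese operator: the union, over balls B on even levels of 𝓢, of
B minus the union of its immediate predecessors (the next-level balls inside B). -/
def Ch (𝓢 : Set (Set U)) : Set U :=
  ⋃ n : ℕ, ⋃ B ∈ Lev (2 * n) 𝓢, B \ ⋃₀ {C | C ∈ Lev (2 * n + 1) 𝓢 ∧ C ⊆ B}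

/-!
Any two balls are nested or disjoint, so the balls of a finite `𝓢` containing a point `x` form a
chain, and the level of a ball in `𝓢` is its number of strict supersets in `𝓢`. Hence `x ∈ Ch 𝓢`
iff `x` lies in an odd number of balls of `𝓢`, so `Ch (𝓢 ∆ 𝓣) = Ch 𝓢 ∆ Ch 𝓣` and `Ch {B} = B`.
The sets `Ch 𝓢` are therefore closed under `∆`, and also under intersection, since two balls meet
in one of them or not at all; as `U` is a ball they contain every constructible set. For
uniqueness, `Ch 𝓢 = Ch 𝓣` gives `Ch (𝓢 ∆ 𝓣) = ∅`, while for a nonempty `𝓡` a maximal ball minus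
its immediate predecessors is a nonempty piece of `Ch 𝓡` by unpackability.
-/

open scoped symmDiff

section Poset

variable {α : Type*} [PartialOrder α] {S T : Set α} {a b : α}

def tops (S : Set α) : Set α := {a | a ∈ S ∧ ∀ b ∈ S, a ≤ b → a = b}

noncomputable def depth (S : Set α) (a : α) : ℕ := {b ∈ S | a < b}.ncard

lemma lev_succ (n : ℕ) (S : Set α) : Lev (n + 1) S = Lev n (S \ tops S) := rfl

lemma lev_subset : ∀ (n : ℕ) (S : Set α), Lev n S ⊆ S
  | 0, _ => fun _ ha => ha.1
  | n + 1, _ => (lev_subset n _).trans Set.sdiff_subset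

lemma IsChain.exists_isGreatest (hT : T.Finite) (hc : IsChain (· ≤ ·) T) (hne : T.Nonempty) :
    ∃ a, IsGreatest T a := by
  obtain ⟨a, haT, hmax⟩ := hT.exists_maximal hne
  exact ⟨a, haT, fun b hb => (hc.total haT hb).elim (fun hab => hmax hb hab) id⟩

lemma IsChain.exists_isLeast (hT : T.Finite) (hc : IsChain (· ≤ ·) T) (hne : T.Nonempty) :
    ∃ a, IsLeast T a := by
  obtain ⟨a, haT, hmin⟩ := hT.exists_minimal hne
  exact ⟨a, haT, fun b hb => (hc.total haT hb).elim id (fun hba => hmin hb hba)⟩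

lemma depth_eq_zero_iff (hS : S.Finite) (ha : a ∈ S) : depth S a = 0 ↔ a ∈ tops S := by
  rw [depth, Set.ncard_eq_zero (hS.subset (Set.sep_subset _ _)), Set.eq_empty_iff_forall_notMem]
  simp only [tops, Set.mem_ofPred_eq, ha, true_and, not_and, lt_iff_le_and_ne]
  exact forall₂_congr fun b _ => by constructor <;> intro h hab <;> by_contra hne <;> tauto

/-- Of the strict upper bounds of `a`, which form a chain, only the greatest one is maximal. -/
lemma depth_sdiff_tops_add_one (hS : S.Finite)
    (hup : ∀ a ∈ S, IsChain (· ≤ ·) {b ∈ S | a ≤ b}) (ha : a ∈ S) (hat : a ∉ tops S) :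
    depth (S \ tops S) a + 1 = depth S a := by
  set V := {b ∈ S | a < b}
  have hV : V.Finite := hS.subset (Set.sep_subset _ _)
  have hVne : V.Nonempty := Set.nonempty_iff_ne_empty.2 fun h =>
    hat ((depth_eq_zero_iff hS ha).1 ((Set.ncard_eq_zero hV).2 h))
  obtain ⟨g, hgV, hg⟩ :=
    ((hup a ha).mono fun _ hb => Set.mem_sep hb.1 hb.2.le).exists_isGreatest hV hVne
  have hgt : g ∈ tops S := ⟨hgV.1, fun b hb hgb => le_antisymm hgb (hg ⟨hb, hgV.2.trans_le hgb⟩)⟩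
  have hdiff : {b ∈ S \ tops S | a < b} = V \ {g} := by
    ext b
    simp only [V, Set.mem_sdiff, Set.mem_sep_iff, Set.mem_singleton_iff]
    constructor
    · rintro ⟨⟨hbS, hbt⟩, hab⟩
      exact ⟨⟨hbS, hab⟩, fun hbg => hbt (hbg ▸ hgt)⟩
    · rintro ⟨⟨hbS, hab⟩, hbg⟩
      exact ⟨⟨hbS, fun hbt => hbg (hbt.2 g hgV.1 (hg ⟨hbS, hab⟩))⟩, hab⟩
  rw [depth, hdiff]
  exact Set.ncard_sdiff_singleton_add_one hgV hV

lemma mem_lev_iff (hS : S.Finite) (hup : ∀ a ∈ S, IsChain (· ≤ ·) {b ∈ S | a ≤ b})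
    (n : ℕ) (a : α) : a ∈ Lev n S ↔ a ∈ S ∧ depth S a = n := by
  induction n generalizing S with
  | zero => exact ⟨fun ha => ⟨ha.1, (depth_eq_zero_iff hS ha.1).2 ha⟩,
      fun ⟨ha, h0⟩ => (depth_eq_zero_iff hS ha).1 h0⟩
  | succ n ih =>
    have hup' : ∀ a ∈ S \ tops S, IsChain (· ≤ ·) {b ∈ S \ tops S | a ≤ b} :=
      fun a ha => (hup a ha.1).mono fun _ hb => Set.mem_sep hb.1.1 hb.2
    rw [lev_succ, ih (hS.subset Set.sdiff_subset) hup', Set.mem_sdiff]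
    by_cases hat : a ∈ tops S
    · simp [hat, (depth_eq_zero_iff hS hat.1).2 hat]
    · by_cases ha : a ∈ S
      · rw [← depth_sdiff_tops_add_one hS hup ha hat]
        simp [ha, hat]
      · simp [ha]

lemma IsLeast.depth_add_one (hT : T.Finite) (ha : IsLeast T a) : depth T a + 1 = T.ncard := by
  have : {b ∈ T | a < b} = T \ {a} := by
    ext b
    simp only [Set.mem_sep_iff, Set.mem_sdiff, Set.mem_singleton_iff, and_congr_right_iff]
    exact fun hb => ⟨fun hab => hab.ne', fun hba => lt_of_le_of_ne (ha.2 hb) (Ne.symm hba)⟩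
  rw [depth, this]
  exact Set.ncard_sdiff_singleton_add_one ha.1 hT

/-- In a finite chain, the greatest element below `a` has depth one more than `a`. -/
lemma IsChain.exists_lt_depth_eq_add_one (hT : T.Finite) (hc : IsChain (· ≤ ·) T) (ha : a ∈ T)
    (hb : b ∈ T) (hba : b < a) : ∃ c ∈ T, c < a ∧ depth T c = depth T a + 1 := by
  obtain ⟨c, ⟨hcT, hca⟩, hc_max⟩ := (hc.mono (Set.sep_subset T (· < a))).exists_isGreatest
    (hT.subset (Set.sep_subset _ _)) ⟨b, hb, hba⟩
  refine ⟨c, hcT, hca, ?_⟩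
  have : {d ∈ T | c < d} = insert a {d ∈ T | a < d} := by
    ext d
    simp only [Set.mem_sep_iff, Set.mem_insert_iff]
    constructor
    · rintro ⟨hdT, hcd⟩
      rcases eq_or_ne d a with rfl | hda
      · exact Or.inl rfl
      refine Or.inr ⟨hdT, (hc.total hdT ha).elim (fun hda' => ?_) (lt_of_le_of_ne · hda.symm)⟩
      exact absurd (hc_max ⟨hdT, lt_of_le_of_ne hda' hda⟩) hcd.not_ge
    · rintro (rfl | ⟨hdT, had⟩)
      · exact ⟨ha, hca⟩
      · exact ⟨hdT, hca.trans had⟩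
  rw [depth, depth, this]
  exact Set.ncard_insert_of_notMem (fun h => h.2.false) (hT.subset (Set.sep_subset _ _))

end Poset

lemma Set.odd_ncard_symmDiff_iff {α : Type*} {s t : Set α} (hs : s.Finite) (ht : t.Finite) :
    Odd (s ∆ t).ncard ↔ ¬(Odd s.ncard ↔ Odd t.ncard) := by
  have hst := Set.ncard_inter_add_ncard_sdiff_eq_ncard s t hs
  have hts := Set.ncard_inter_add_ncard_sdiff_eq_ncard t s ht
  rw [Set.inter_comm] at hts
  rw [Set.symmDiff_def, Set.ncard_union_eq disjoint_sdiff_sdiff (hs.sdiff) (ht.sdiff)]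
  simp only [Nat.odd_iff]
  omega

variable {𝓑 𝓢 𝓣 : Set (Set U)} {A B X Y : Set U}

lemma DirFam.mono (h : DirFam 𝓑) (h𝓢 : 𝓢 ⊆ 𝓑) : DirFam 𝓢 :=
  ⟨fun B hB => h.1 B (h𝓢 hB), fun B hB C hC => h.2 B (h𝓢 hB) C (h𝓢 hC)⟩

lemma DirFam.isChain_sep_mem (h : DirFam 𝓑) (x : U) : IsChain (· ≤ ·) {B ∈ 𝓑 | x ∈ B} := by
  intro B hB C hC _
  rcases h.2 B hB.1 C hC.1 with hBC | hCB | hdisj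
  · exact Or.inl hBC
  · exact Or.inr hCB
  · exact absurd (hdisj ▸ ⟨hB.2, hC.2⟩ : x ∈ (∅ : Set U)) id

lemma DirFam.isChain_sep_supset (h : DirFam 𝓑) (hA : A ∈ 𝓑) :
    IsChain (· ≤ ·) {B ∈ 𝓑 | A ≤ B} :=
  let ⟨x, hx⟩ := h.1 A hA
  (h.isChain_sep_mem x).mono fun _ hB => Set.mem_sep hB.1 (hB.2 hx)

/-- The balls of `𝓢` containing `x` form a chain, and `x` survives in `Ch 𝓢` exactly when the
smallest of them has even depth. -/
lemma mem_ch_iff_odd (h : DirFam 𝓢) (hfin : 𝓢.Finite) (x : U) :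
    x ∈ Ch 𝓢 ↔ Odd {B ∈ 𝓢 | x ∈ B}.ncard := by
  set T := {B ∈ 𝓢 | x ∈ B}
  have hT : T.Finite := hfin.subset (Set.sep_subset _ _)
  have hchain : IsChain (· ≤ ·) T := h.isChain_sep_mem x
  have hdepth : ∀ B ∈ T, depth 𝓢 B = depth T B := fun B hB => by
    rw [depth, depth]
    congr 1
    ext C
    exact ⟨fun hC => ⟨⟨hC.1, hC.2.le hB.2⟩, hC.2⟩, fun hC => ⟨hC.1.1, hC.2⟩⟩
  have hlev : ∀ n, ∀ B ∈ T, B ∈ Lev n 𝓢 ↔ depth T B = n := fun n B hB => by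
    rw [mem_lev_iff hfin (fun A hA => h.isChain_sep_supset hA), hdepth B hB]
    exact and_iff_right hB.1
  simp only [Ch, Set.mem_iUnion, Set.mem_sdiff, Set.mem_sUnion, Set.mem_ofPred_eq, not_exists,
    not_and, exists_prop]
  constructor
  · rintro ⟨n, B, hBlev, hxB, hholes⟩
    have hBT : B ∈ T := ⟨lev_subset _ _ hBlev, hxB⟩
    have hBleast : IsLeast T B := ⟨hBT, fun C hCT => by
      by_contra hBC
      have hCB : C < B := lt_of_le_of_ne ((hchain.total hBT hCT).resolve_left hBC)
        (fun h => hBC (h ▸ le_rfl))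
      obtain ⟨D, hDT, hDB, hD⟩ := hchain.exists_lt_depth_eq_add_one hT hBT hCT hCB
      rw [(hlev _ B hBT).1 hBlev] at hD
      exact hholes D ⟨(hlev _ D hDT).2 hD, hDB.le⟩ hDT.2⟩
    rw [← hBleast.depth_add_one hT, (hlev _ B hBT).1 hBlev]
    exact odd_two_mul_add_one n
  · intro hodd
    obtain ⟨B, hBT, hBleast⟩ :=
      hchain.exists_isLeast hT (Set.nonempty_of_ncard_ne_zero hodd.pos.ne')
    obtain ⟨n, hn⟩ := hodd
    have hBdepth : depth T B = 2 * n := by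
      have := IsLeast.depth_add_one hT ⟨hBT, hBleast⟩
      omega
    refine ⟨n, B, (hlev _ B hBT).2 hBdepth, hBT.2, fun C ⟨hClev, hCB⟩ hxC => ?_⟩
    have hCT : C ∈ T := ⟨lev_subset _ _ hClev, hxC⟩
    have := (hlev _ C hCT).1 hClev
    rw [le_antisymm hCB (hBleast hCT), hBdepth] at this
    omega

lemma ch_symmDiff (h : DirFam 𝓑) (h𝓢 : 𝓢 ⊆ 𝓑) (h𝓣 : 𝓣 ⊆ 𝓑) (hfin𝓢 : 𝓢.Finite)
    (hfin𝓣 : 𝓣.Finite) : Ch (𝓢 ∆ 𝓣) = Ch 𝓢 ∆ Ch 𝓣 := by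
  have hsub : 𝓢 ∆ 𝓣 ⊆ 𝓑 := symmDiff_le_sup.trans (Set.union_subset h𝓢 h𝓣)
  ext x
  rw [Set.mem_symmDiff, mem_ch_iff_odd (h.mono hsub) ((hfin𝓢.union hfin𝓣).subset symmDiff_le_sup),
    mem_ch_iff_odd (h.mono h𝓢) hfin𝓢, mem_ch_iff_odd (h.mono h𝓣) hfin𝓣]
  have : {B ∈ 𝓢 ∆ 𝓣 | x ∈ B} = {B ∈ 𝓢 | x ∈ B} ∆ {B ∈ 𝓣 | x ∈ B} := by
    ext B
    simp only [Set.mem_symmDiff, Set.mem_ofPred_eq]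
    tauto
  rw [this, Set.odd_ncard_symmDiff_iff (hfin𝓢.subset (Set.sep_subset _ _))
    (hfin𝓣.subset (Set.sep_subset _ _))]
  tauto

lemma ch_empty : Ch (∅ : Set (Set U)) = ∅ :=
  Set.eq_empty_of_forall_notMem fun _ hx =>
    let ⟨_, hn⟩ := Set.mem_iUnion.1 hx
    let ⟨_, hB, _⟩ := Set.mem_iUnion₂.1 hn
    lev_subset _ _ hB

lemma ch_singleton (hB : B.Nonempty) : Ch {B} = B := by
  have h : DirFam {B} := ⟨by simpa using hB, by simp⟩
  ext x
  rw [mem_ch_iff_odd h (Set.finite_singleton B)]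
  by_cases hx : x ∈ B
  · rw [Set.sep_eq_self_iff_mem_true.2 (by simpa using hx)]
    simp [hx]
  · rw [Set.sep_eq_empty_iff_mem_false.2 (by simpa using hx)]
    simp [hx]

lemma ch_insert (h : DirFam 𝓑) (h𝓢 : 𝓢 ⊆ 𝓑) (hfin : 𝓢.Finite) (hB : B ∈ 𝓑) (hB𝓢 : B ∉ 𝓢) :
    Ch (insert B 𝓢) = Ch 𝓢 ∆ B := by
  have : insert B 𝓢 = 𝓢 ∆ {B} := by
    rw [(Set.disjoint_singleton_right.2 hB𝓢).symmDiff_eq_sup]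
    exact Set.union_singleton.symm
  rw [this, ch_symmDiff h h𝓢 (Set.singleton_subset_iff.2 hB) hfin (Set.finite_singleton B),
    ch_singleton (h.1 B hB)]

/-- A maximal ball of `𝓡` minus its immediate predecessors lies in `Ch 𝓡`, and is nonempty by
unpackability. -/
lemma ch_nonempty (hunp : Unpackable 𝓑) {𝓡 : Set (Set U)} (h𝓡 : 𝓡 ⊆ 𝓑) (hfin : 𝓡.Finite)
    (hne : 𝓡.Nonempty) : (Ch 𝓡).Nonempty := by
  obtain ⟨B, hB𝓡, hBmax⟩ := hfin.exists_maximal hne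
  have hBtop : B ∈ Lev 0 𝓡 := ⟨hB𝓡, fun C hC hBC => le_antisymm hBC (hBmax hC hBC)⟩
  set H := {C | C ∈ Lev (2 * 0 + 1) 𝓡 ∧ C ⊆ B}
  have hHlev : ∀ C ∈ H, C ∈ 𝓡 \ tops 𝓡 := fun C hC => lev_subset 0 _ hC.1
  have hHssub : ∀ C ∈ H, C ⊂ B := fun C hC =>
    ssubset_of_subset_of_ne hC.2 fun hCB => (hHlev C hC).2 (hCB ▸ hBtop)
  have hHfin : H.Finite := hfin.subset fun C hC => (hHlev C hC).1
  obtain ⟨x, hxB, hxH⟩ := Set.exists_of_ssubset (ssubset_of_subset_of_ne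
    (Set.sUnion_subset fun C hC => (hHssub C hC).subset)
    (hunp B (h𝓡 hB𝓡) H hHfin (fun C hC => h𝓡 (hHlev C hC).1) hHssub).symm)
  exact ⟨x, Set.mem_iUnion.2 ⟨0, Set.mem_iUnion₂.2 ⟨B, hBtop, hxB, hxH⟩⟩⟩

lemma eq_of_ch_eq (h : DirFam 𝓑) (hunp : Unpackable 𝓑) (h𝓢 : 𝓢 ⊆ 𝓑) (h𝓣 : 𝓣 ⊆ 𝓑)
    (hfin𝓢 : 𝓢.Finite) (hfin𝓣 : 𝓣.Finite) (hch : Ch 𝓢 = Ch 𝓣) : 𝓢 = 𝓣 := by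
  rw [← symmDiff_eq_bot, Set.bot_eq_empty, ← Set.not_nonempty_iff_eq_empty]
  intro hne
  obtain ⟨x, hx⟩ := ch_nonempty hunp (symmDiff_le_sup.trans (Set.union_subset h𝓢 h𝓣))
    ((hfin𝓢.union hfin𝓣).subset symmDiff_le_sup) hne
  rw [ch_symmDiff h h𝓢 h𝓣 hfin𝓢 hfin𝓣, hch, symmDiff_self] at hx
  exact hx

def IsSwissCheese (𝓑 : Set (Set U)) (X : Set U) : Prop :=
  ∃ 𝓢 ⊆ 𝓑, 𝓢.Finite ∧ X = Ch 𝓢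

lemma isSwissCheese_empty : IsSwissCheese 𝓑 ∅ :=
  ⟨∅, Set.empty_subset _, Set.finite_empty, ch_empty.symm⟩

lemma isSwissCheese_of_mem (h : DirFam 𝓑) (hB : B ∈ 𝓑) : IsSwissCheese 𝓑 B :=
  ⟨{B}, Set.singleton_subset_iff.2 hB, Set.finite_singleton B, (ch_singleton (h.1 B hB)).symm⟩

namespace IsSwissCheese

lemma symmDiff (h : DirFam 𝓑) (hX : IsSwissCheese 𝓑 X) (hY : IsSwissCheese 𝓑 Y) :
    IsSwissCheese 𝓑 (X ∆ Y) := by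
  obtain ⟨𝓢, h𝓢, hfin𝓢, rfl⟩ := hX
  obtain ⟨𝓣, h𝓣, hfin𝓣, rfl⟩ := hY
  exact ⟨_, symmDiff_le_sup.trans (Set.union_subset h𝓢 h𝓣),
    (hfin𝓢.union hfin𝓣).subset symmDiff_le_sup, (ch_symmDiff h h𝓢 h𝓣 hfin𝓢 hfin𝓣).symm⟩

/-- `Ch 𝓢` is the symmetric difference of the balls of `𝓢`. -/
lemma induction_on (h : DirFam 𝓑) {P : Set U → Prop} (hX : IsSwissCheese 𝓑 X) (empty : P ∅)
    (symmDiff_mem : ∀ Y, ∀ B ∈ 𝓑, P Y → P (Y ∆ B)) : P X := by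
  obtain ⟨𝓢, h𝓢, hfin, rfl⟩ := hX
  induction 𝓢, hfin using Set.Finite.induction_on with
  | empty => rwa [ch_empty]
  | @insert B 𝓢 hB𝓢 hfin ih =>
    have hB : B ∈ 𝓑 := h𝓢 (Set.mem_insert B 𝓢)
    have h𝓢' : 𝓢 ⊆ 𝓑 := (Set.subset_insert B 𝓢).trans h𝓢
    rw [ch_insert h h𝓢' hfin hB hB𝓢]
    exact symmDiff_mem _ B hB (ih h𝓢')

/-- Two balls of a directed family meet in `∅` or in one of them. -/
lemma inter_mem (h : DirFam 𝓑) (hX : IsSwissCheese 𝓑 X) (hB : B ∈ 𝓑) :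
    IsSwissCheese 𝓑 (X ∩ B) := by
  refine hX.induction_on (P := fun Y => IsSwissCheese 𝓑 (Y ∩ B)) h
    (by rw [Set.empty_inter]; exact isSwissCheese_empty) fun Y C hC hY => ?_
  rw [Set.inter_symmDiff_distrib_right]
  refine hY.symmDiff h ?_
  rcases h.2 C hC B hB with hCB | hBC | hdisj
  · rw [Set.inter_eq_left.2 hCB]
    exact isSwissCheese_of_mem h hC
  · rw [Set.inter_eq_right.2 hBC]
    exact isSwissCheese_of_mem h hB
  · rw [hdisj]
    exact isSwissCheese_empty

lemma inter (h : DirFam 𝓑) (hX : IsSwissCheese 𝓑 X) (hY : IsSwissCheese 𝓑 Y) :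
    IsSwissCheese 𝓑 (X ∩ Y) := by
  refine hY.induction_on (P := fun Z => IsSwissCheese 𝓑 (X ∩ Z)) h
    (by rw [Set.inter_empty]; exact isSwissCheese_empty) fun Z B hB hZ => ?_
  rw [Set.inter_symmDiff_distrib_left]
  exact hZ.symmDiff h (hX.inter_mem h hB)

lemma union (h : DirFam 𝓑) (hX : IsSwissCheese 𝓑 X) (hY : IsSwissCheese 𝓑 Y) :
    IsSwissCheese 𝓑 (X ∪ Y) := by
  rw [show X ∪ Y = X ∆ Y ∆ (X ∩ Y) from (symmDiff_symmDiff_inf X Y).symm]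
  exact (hX.symmDiff h hY).symmDiff h (hX.inter h hY)

lemma compl (h : DirFam 𝓑) (hU : (Set.univ : Set U) ∈ 𝓑) (hX : IsSwissCheese 𝓑 X) :
    IsSwissCheese 𝓑 Xᶜ := by
  rw [← hnot_eq_compl, ← top_symmDiff]
  exact (isSwissCheese_of_mem h hU).symmDiff h hX

end IsSwissCheese

lemma Constr.isSwissCheese (h : DirFam 𝓑) (hU : (Set.univ : Set U) ∈ 𝓑) (hX : Constr 𝓑 X) :
    IsSwissCheese 𝓑 X := by
  induction hX with
  | ball hB => exact isSwissCheese_of_mem h hB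
  | compl _ ih => exact ih.compl h hU
  | union _ _ ihX ihY => exact ihX.union h ihY

/-- In an unpackable directed family, every constructible set is Ch(𝓢) for a unique
finite set 𝓢 of balls. -/
theorem stmt11 (𝓑 : Set (Set U)) (h : DirFam 𝓑) (hU : (Set.univ : Set U) ∈ 𝓑)
    (hunp : Unpackable 𝓑) (X : Set U) (hX : Constr 𝓑 X) :
    ∃! 𝓢 : Set (Set U), 𝓢 ⊆ 𝓑 ∧ 𝓢.Finite ∧ X = Ch 𝓢 := by
  obtain ⟨𝓢, h𝓢, hfin, rfl⟩ := hX.isSwissCheese h hU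
  refine ⟨𝓢, ⟨h𝓢, hfin, rfl⟩, ?_⟩
  rintro 𝓣 ⟨h𝓣, hfin𝓣, hch⟩
  exact eq_of_ch_eq h hunp h𝓣 h𝓢 hfin𝓣 hfin hch.symm
end
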